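/- For every n ≥ 1, the number of non-ambiguous trees with n vertices (over all binary tree shapes with n vertices) equals the number of labelled ordered trees with n vertices in the class NOT. -/

import Mathlib

inductive BT : Type where
  | nil : BT
  | node : BT → BT → BT
  deriving DecidableEq

namespace BT

/-- The list of positions (paths from the root, `false` = left step, `true` = right step)
of the vertices of a binary tree. -/
def paths : BT → List (List Bool)
  | .nil => []
  | .node l r => [] :: (l.paths.map (List.cons false) ++ r.paths.map (List.cons true))

/-- Number of vertices. -/
def size (B : BT) : ℕ := B.paths.length

/-- The set of left children (positions ending with a left step). -/
def leftVertices (B : BT) : Finset (List Bool) :=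
  B.paths.toFinset.filter (fun p => p.getLast? = some false)

/-- The set of right children (positions ending with a right step). -/
def rightVertices (B : BT) : Finset (List Bool) :=
  B.paths.toFinset.filter (fun p => p.getLast? = some true)

end BT

/-- A non-ambiguous tree of shape `B`: bijective labellings of the left (resp. right)
children by `Fin |LV B|` (resp. `Fin |RV B|`), decreasing along ancestry. -/
structure NAT (B : BT) where
  fL : {p // p ∈ B.leftVertices} → Fin B.leftVertices.card
  fR : {p // p ∈ B.rightVertices} → Fin B.rightVertices.card
  bijL : Function.Bijective fL
  bijR : Function.Bijective fR
  ancL : ∀ u v : {p // p ∈ B.leftVertices}, u.1 <+: v.1 → u ≠ v → (fL v : ℕ) < fL u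
  ancR : ∀ u v : {p // p ∈ B.rightVertices}, u.1 <+: v.1 → u ≠ v → (fR v : ℕ) < fR u

inductive OT : Type where
  | node : List OT → OT

namespace OT

mutual
  /-- The list of positions (paths of child indices from the root) of the vertices
  of an ordered tree. -/
  def paths : OT → List (List ℕ)
    | .node cs => [] :: pathsAux 0 cs
  /-- Positions of the vertices of a forest, the `i`-th tree being reached by index `n + i`. -/
  def pathsAux : ℕ → List OT → List (List ℕ)
    | _, [] => []
    | n, c :: cs => (paths c).map (List.cons n) ++ pathsAux (n + 1) cs
end

/-- Number of vertices of an ordered tree. -/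
def size (t : OT) : ℕ := t.paths.length

/-- The non-root vertices of an ordered tree. -/
def nonRoot (t : OT) : Finset (List ℕ) := t.paths.toFinset.erase []

end OT

/-- A labelling of an ordered tree `O` making it a member of the class `NOT`:
every non-root vertex gets a colour (`true` = red, `false` = blue) and a label; the labels
of the red (resp. blue) vertices are exactly `1,…,r` (resp. `1,…,b`) without repetition
(the root implicitly carrying the maximal pair `(r+1, b+1)`); red children of the root come
before blue ones; colours alternate along edges below the root; and the label of any red
(resp. blue) vertex is strictly greater than the labels of the red (resp. blue) vertices
among its descendants and its siblings lying to its right. -/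
structure NOTL (O : OT) where
  colour : {p // p ∈ O.nonRoot} → Bool
  label : {p // p ∈ O.nonRoot} → ℕ
  bijRed : Set.BijOn label {v | colour v = true}
    (Set.Icc 1 (Set.ncard {v : {p // p ∈ O.nonRoot} | colour v = true}))
  bijBlue : Set.BijOn label {v | colour v = false}
    (Set.Icc 1 (Set.ncard {v : {p // p ∈ O.nonRoot} | colour v = false}))
  rootOrder : ∀ (i j : ℕ) (hi : [i] ∈ O.nonRoot) (hj : [j] ∈ O.nonRoot),
    colour ⟨[i], hi⟩ = true → colour ⟨[j], hj⟩ = false → i < j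
  alternating : ∀ (v w : {p // p ∈ O.nonRoot}), (∃ i, w.1 = v.1 ++ [i]) →
    colour w = ! colour v
  decreasing : ∀ (v w : {p // p ∈ O.nonRoot}), colour v = colour w →
    ((v.1 <+: w.1 ∧ v ≠ w) ∨ ∃ q i j, v.1 = q ++ [i] ∧ w.1 = q ++ [j] ∧ i < j) →
    label w < label v

/-!
The bijection rotates the binary tree `node l r`: a vertex reached by a `b`-step becomes a vertex
of colour `!b` (left children are red, right children blue), a further `b`-step leads to its next
sibling and a `!b`-step to its first child. So the children of the root are the left spine of `l`
followed by the right spine of `r`, and labels are carried over shifted by one. Among vertices of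
one colour, strict ancestry in the binary tree is the transitive closure of "descendant or right
sibling" in the ordered tree, so the two monotonicity conditions agree. Conversely, `rootOrder`
and `alternating` force all colours of a `NOT` tree once the number of red children of the root is
known, and that number says where to cut the children of the root into the two spines.
-/

open List

theorem List.getLast?_cons_eq_getLastD {α : Type*} (a : α) (l : List α) :
    (a :: l).getLast? = some (l.getLastD a) := by
  rw [getLast?_cons, getLastD_eq_getLast?]

theorem exists_eq_replicate_append (b : Bool) (t : List Bool) :
    ∃ a s, t = replicate a b ++ s ∧ (s = [] ∨ ∃ s', s = (!b) :: s') := by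
  induction t with
  | nil => exact ⟨0, [], rfl, Or.inl rfl⟩
  | cons c t ih =>
    by_cases hc : c = b
    · obtain ⟨a, s, rfl, hs⟩ := ih
      exact ⟨a + 1, s, by rw [hc, replicate_succ, cons_append], hs⟩
    · exact ⟨0, c :: t, rfl, Or.inr ⟨t, by rw [Bool.eq_not_of_ne hc]⟩⟩

namespace BT

def child : BT → Bool → BT
  | nil, _ => nil
  | node a _, false => a
  | node _ b, true => b

def nonRoot (B : BT) : Finset (List Bool) := B.paths.toFinset.erase []

def sideVertices (B : BT) (b : Bool) : Finset (List Bool) :=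
  B.paths.toFinset.filter (fun p => p.getLast? = some b)

theorem not_mem_paths_nil (p : List Bool) : p ∉ nil.paths := by simp [paths]

theorem nil_mem_paths_node (a b : BT) : [] ∈ (node a b).paths := by simp [paths]

theorem cons_mem_paths_node {a b : BT} {c : Bool} {q : List Bool} :
    c :: q ∈ (node a b).paths ↔ q ∈ ((node a b).child c).paths := by
  cases c <;> simp [paths, child]

theorem mem_paths_of_prefix {B : BT} {p p' : List Bool} (h : p <+: p') (h' : p' ∈ B.paths) :
    p ∈ B.paths := by
  induction p generalizing B p' with
  | nil => cases B with
    | nil => exact absurd h' (not_mem_paths_nil _)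
    | node a b => exact nil_mem_paths_node a b
  | cons c q ih =>
    obtain ⟨s, rfl⟩ := h
    cases B with
    | nil => exact absurd h' (not_mem_paths_nil _)
    | node a b =>
      rw [cons_append, cons_mem_paths_node] at h'
      rw [cons_mem_paths_node]
      exact ih (prefix_append q s) h'

theorem mem_nonRoot {B : BT} {p : List Bool} : p ∈ B.nonRoot ↔ p ∈ B.paths ∧ p ≠ [] := by
  simp [nonRoot, and_comm]

theorem cons_mem_nonRoot_node {a b : BT} {c : Bool} {q : List Bool} :
    c :: q ∈ (node a b).nonRoot ↔ q ∈ ((node a b).child c).paths := by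
  simp [mem_nonRoot, cons_mem_paths_node]

theorem mem_sideVertices {B : BT} {b : Bool} {p : List Bool} :
    p ∈ B.sideVertices b ↔ p ∈ B.paths ∧ p.getLast? = some b := by
  simp [sideVertices]

theorem append_replicate_mem_sideVertices {B : BT} {b : Bool} {p : List Bool} {a : ℕ}
    (hp : p ∈ B.sideVertices b) (h : p ++ replicate a b ∈ B.paths) :
    p ++ replicate a b ∈ B.sideVertices b := by
  rw [mem_sideVertices] at hp ⊢
  refine ⟨h, ?_⟩
  rcases Nat.eq_zero_or_pos a with rfl | ha
  · simpa using hp.2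
  · simp [getLast?_append, getLast?_replicate, ha.ne']

theorem mem_nonRoot_of_mem_sideVertices {B : BT} {b : Bool} {p : List Bool}
    (h : p ∈ B.sideVertices b) : p ∈ B.nonRoot := by
  obtain ⟨hp, hb⟩ := mem_sideVertices.mp h
  exact mem_nonRoot.mpr ⟨hp, by rintro rfl; simp at hb⟩

def spine : Bool → BT → List OT
  | _, nil => []
  | false, node a b => OT.node (spine true b) :: spine false a
  | true, node a b => OT.node (spine false a) :: spine true b

def ofSpine : Bool → List OT → BT
  | _, [] => nil
  | false, OT.node ds :: rest => node (ofSpine false rest) (ofSpine true ds)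
  | true, OT.node ds :: rest => node (ofSpine false ds) (ofSpine true rest)

theorem spine_node (d : Bool) (a b : BT) :
    spine d (node a b) =
      OT.node (spine (!d) ((node a b).child (!d))) :: spine d ((node a b).child d) := by
  cases d <;> rfl

theorem ofSpine_spine (d : Bool) (B : BT) : ofSpine d (spine d B) = B := by
  induction B generalizing d with
  | nil => cases d <;> simp [spine, ofSpine]
  | node a b iha ihb => cases d <;> simp [spine, ofSpine, iha, ihb]

theorem spine_ofSpine : (d : Bool) → (L : List OT) → spine d (ofSpine d L) = L
  | d, [] => by cases d <;> simp [spine, ofSpine]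
  | false, OT.node ds :: rest => by
    simp only [ofSpine, spine, spine_ofSpine true ds, spine_ofSpine false rest]
  | true, OT.node ds :: rest => by
    simp only [ofSpine, spine, spine_ofSpine false ds, spine_ofSpine true rest]

theorem replicate_mem_paths_iff {B : BT} {d : Bool} {j : ℕ} :
    replicate j d ∈ B.paths ↔ j < (spine d B).length := by
  induction j generalizing B with
  | zero => cases B <;> simp [not_mem_paths_nil, nil_mem_paths_node, spine_node, spine]
  | succ j ih =>
    cases B with
    | nil => simp [not_mem_paths_nil, spine]
    | node a b => simp [replicate_succ, cons_mem_paths_node, ih, spine_node]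

end BT

namespace OT

theorem nil_mem_paths (t : OT) : [] ∈ t.paths := by
  cases t; simp [paths]

theorem pathsAux_append (L₁ L₂ : List OT) (k : ℕ) :
    pathsAux k (L₁ ++ L₂) = pathsAux k L₁ ++ pathsAux (k + L₁.length) L₂ := by
  induction L₁ generalizing k with
  | nil => simp [pathsAux]
  | cons c cs ih => simp [pathsAux, ih, Nat.add_right_comm, Nat.add_assoc]

theorem mem_pathsAux {k : ℕ} {cs : List OT} {o : List ℕ} :
    o ∈ pathsAux k cs ↔
      ∃ i o', o = (k + i) :: o' ∧ ∃ h : i < cs.length, o' ∈ cs[i].paths := by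
  induction cs generalizing k with
  | nil => simp [pathsAux]
  | cons c cs ih =>
    simp only [pathsAux, mem_append, mem_map, ih]
    constructor
    · rintro (⟨o', ho', rfl⟩ | ⟨i, o', rfl, hi, ho'⟩)
      · exact ⟨0, o', by simp, by simp, ho'⟩
      · exact ⟨i + 1, o', by congr 1; omega, Nat.succ_lt_succ hi, by simpa using ho'⟩
    · rintro ⟨_ | i, o', rfl, hi, ho'⟩
      · exact Or.inl ⟨o', by simpa using ho', by simp⟩
      · exact Or.inr ⟨i, o', by congr 1; omega, Nat.lt_of_succ_lt_succ hi, by simpa using ho'⟩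

theorem cons_mem_paths_node {cs : List OT} {i : ℕ} {o : List ℕ} :
    i :: o ∈ (node cs).paths ↔ ∃ h : i < cs.length, o ∈ cs[i].paths := by
  simp [paths, mem_pathsAux]

theorem mem_paths_of_prefix {t : OT} {o o' : List ℕ} (h : o <+: o') (h' : o' ∈ t.paths) :
    o ∈ t.paths := by
  induction o generalizing t o' with
  | nil => exact nil_mem_paths t
  | cons i o ih =>
    obtain ⟨s, rfl⟩ := h
    obtain ⟨cs⟩ := t
    rw [cons_append, cons_mem_paths_node] at h'
    obtain ⟨hi, ho⟩ := h'
    exact cons_mem_paths_node.mpr ⟨hi, ih (prefix_append o s) ho⟩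

theorem mem_nonRoot {t : OT} {o : List ℕ} : o ∈ t.nonRoot ↔ o ∈ t.paths ∧ o ≠ [] := by
  simp [nonRoot, and_comm]

theorem singleton_mem_nonRoot_node {cs : List OT} {i : ℕ} :
    [i] ∈ (node cs).nonRoot ↔ i < cs.length := by
  simp [mem_nonRoot, cons_mem_paths_node, nil_mem_paths]

theorem length_pathsAux (k : ℕ) (cs : List OT) : (pathsAux k cs).length = (cs.map size).sum := by
  induction cs generalizing k with
  | nil => simp [pathsAux]
  | cons c cs ih => simp [pathsAux, ih, size]

theorem size_node (cs : List OT) : (node cs).size = (cs.map size).sum + 1 := by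
  simp [size, paths, length_pathsAux]

end OT

namespace BT

theorem size_node (a b : BT) : (node a b).size = a.size + b.size + 1 := by
  simp [size, paths]

theorem sum_size_spine (d : Bool) (B : BT) : ((spine d B).map OT.size).sum = B.size := by
  induction B generalizing d with
  | nil => cases d <;> simp [spine, size, paths]
  | node a b iha ihb =>
    cases d <;> simp [spine, OT.size_node, iha, ihb, size_node] <;> omega

end BT

/-- The position in `toOT` of the vertex reached by `q` from the `k`-th vertex of a `d`-spine. -/
def ordPath : Bool → ℕ → List Bool → List ℕ
  | _, k, [] => [k]
  | d, k, c :: q => if c = d then ordPath d (k + 1) q else k :: ordPath (!d) 0 q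

def binPath : Bool → List ℕ → List Bool
  | _, [] => []
  | c, i :: o => replicate (i + 1) c ++ binPath (!c) o

theorem ordPath_cons_self (d : Bool) (k : ℕ) (q : List Bool) :
    ordPath d k (d :: q) = ordPath d (k + 1) q := by
  simp [ordPath]

theorem ordPath_cons_not (d : Bool) (k : ℕ) (q : List Bool) :
    ordPath d k ((!d) :: q) = k :: ordPath (!d) 0 q := by
  simp [ordPath]

theorem ordPath_replicate (d : Bool) (k a : ℕ) : ordPath d k (replicate a d) = [k + a] := by
  induction a generalizing k with
  | zero => simp [ordPath]
  | succ a ih => rw [replicate_succ, ordPath_cons_self, ih, Nat.add_right_comm, Nat.add_assoc]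

theorem binPath_ordPath (d : Bool) (k : ℕ) (q : List Bool) :
    binPath d (ordPath d k q) = replicate (k + 1) d ++ q := by
  induction q generalizing d k with
  | nil => simp [ordPath, binPath]
  | cons c q ih =>
    by_cases hc : c = d
    · subst hc
      simp [ordPath_cons_self, ih, replicate_succ']
    · obtain rfl := Bool.eq_not_of_ne hc
      simp [ordPath_cons_not, binPath, ih]

theorem ordPath_injective (d : Bool) (k : ℕ) : Function.Injective (ordPath d k) :=
  fun q q' h => append_cancel_left <| by
    rw [← binPath_ordPath, ← binPath_ordPath, h]

theorem ordPath_head (d : Bool) (k : ℕ) (q : List Bool) :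
    ∃ j o, ordPath d k q = (k + j) :: o ∧ replicate j d <+: q := by
  induction q generalizing d k with
  | nil => exact ⟨0, [], by simp [ordPath], by simp⟩
  | cons c q ih =>
    by_cases hc : c = d
    · subst hc
      obtain ⟨j, o, h, hj⟩ := ih c (k + 1)
      refine ⟨j + 1, o, by rw [ordPath_cons_self, h, Nat.add_right_comm, Nat.add_assoc], ?_⟩
      simpa [replicate_succ] using hj
    · obtain rfl := Bool.eq_not_of_ne hc
      exact ⟨0, _, ordPath_cons_not d k q, by simp⟩

theorem odd_length_ordPath (d : Bool) (k : ℕ) (q : List Bool) :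
    Odd (ordPath d k q).length ↔ q.getLastD d = d := by
  induction q generalizing d k with
  | nil => simp [ordPath]
  | cons c q ih =>
    by_cases hc : c = d
    · subst hc
      rw [ordPath_cons_self, ih, getLastD_cons]
    · obtain rfl := Bool.eq_not_of_ne hc
      rw [ordPath_cons_not, length_cons, Nat.odd_add_one, ih, getLastD_cons]
      cases q.getLastD (!d) <;> cases d <;> simp

theorem ordPath_append_cons_not {d b : Bool} {q : List Bool} (h : q.getLastD d = b) (k : ℕ)
    (s : List Bool) : ordPath d k (q ++ (!b) :: s) = ordPath d k q ++ ordPath (!b) 0 s := by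
  induction q generalizing d k with
  | nil =>
    obtain rfl : d = b := h
    simp [ordPath_cons_not, ordPath]
  | cons c q ih =>
    rw [getLastD_cons] at h
    by_cases hc : c = d
    · subst hc
      simp only [cons_append, ordPath_cons_self]
      exact ih h (k + 1)
    · obtain rfl := Bool.eq_not_of_ne hc
      simp only [cons_append, ordPath_cons_not, ih h 0]

theorem ordPath_append_replicate {d b : Bool} {q : List Bool} (h : q.getLastD d = b) (k a : ℕ) :
    ∃ u i, ordPath d k q = u ++ [i] ∧ ordPath d k (q ++ replicate a b) = u ++ [i + a] := by
  induction q generalizing d k with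
  | nil =>
    obtain rfl : d = b := h
    exact ⟨[], k, by simp [ordPath], by simp [ordPath_replicate]⟩
  | cons c q ih =>
    rw [getLastD_cons] at h
    by_cases hc : c = d
    · subst hc
      simpa only [cons_append, ordPath_cons_self] using ih h (k + 1)
    · obtain rfl := Bool.eq_not_of_ne hc
      obtain ⟨u, i, h₁, h₂⟩ := ih h 0
      exact ⟨k :: u, i, by rw [ordPath_cons_not, h₁, cons_append],
        by rw [cons_append, ordPath_cons_not, h₂, cons_append]⟩

theorem binPath_append (c : Bool) (o o' : List ℕ) :
    binPath c (o ++ o') = binPath c o ++ binPath (c ^^ o.length.bodd) o' := by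
  induction o generalizing c with
  | nil => simp [binPath]
  | cons i o ih => simp [binPath, ih, Nat.bodd_succ]

def DescOrRightSibling (v w : List ℕ) : Prop :=
  (v <+: w ∧ v ≠ w) ∨ ∃ u i j, v = u ++ [i] ∧ w = u ++ [j] ∧ i < j

theorem exists_binPath_eq_append {o o' : List ℕ} (h : DescOrRightSibling o o') (c : Bool) :
    ∃ t ≠ [], binPath c o' = binPath c o ++ t := by
  rcases h with ⟨⟨_ | ⟨i, s⟩, rfl⟩, hne⟩ | ⟨u, i, j, rfl, rfl, hij⟩
  · simp at hne
  · exact ⟨_, by simp [binPath], binPath_append c o _⟩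
  · refine ⟨replicate (j - i) (c ^^ u.length.bodd), by simpa using Nat.sub_ne_zero_of_lt hij, ?_⟩
    rw [binPath_append, binPath_append, append_assoc]
    simp only [binPath, append_nil, ← replicate_add]
    congr 2
    omega

def canonicalColour (m : ℕ) (o : List ℕ) : Bool := decide (o.headD 0 < m ↔ Odd o.length)

theorem canonicalColour_singleton (m i : ℕ) : canonicalColour m [i] = decide (i < m) := by
  simp [canonicalColour]

theorem canonicalColour_append_singleton {o : List ℕ} (ho : o ≠ []) (m i : ℕ) :
    canonicalColour m (o ++ [i]) = !canonicalColour m o := by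
  obtain ⟨j, o, rfl⟩ := exists_cons_of_ne_nil ho
  simp only [canonicalColour, cons_append, headD_cons, length_cons, length_append,
    Nat.odd_add_one]
  by_cases h : j < m <;> simp [h, Nat.even_add_one, ← Nat.not_even_iff_odd]

/-- Related positions lie on the same side of the cut at `m`: at depth one, where a right sibling
may cross it, the colour tells the sides apart. -/
theorem headD_lt_iff_of_descOrRightSibling {m : ℕ} {o o' : List ℕ} (ho : o ≠ [])
    (h : DescOrRightSibling o o') (hcol : canonicalColour m o = canonicalColour m o') :
    o.headD 0 < m ↔ o'.headD 0 < m := by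
  rcases h with ⟨⟨s, rfl⟩, -⟩ | ⟨_ | ⟨a, u⟩, i, j, rfl, rfl, -⟩
  · obtain ⟨i, o, rfl⟩ := exists_cons_of_ne_nil ho
    rfl
  · simpa [canonicalColour_singleton] using hcol
  · rfl

def toOT (l r : BT) : OT := .node (BT.spine false l ++ BT.spine true r)

theorem size_toOT (l r : BT) : (toOT l r).size = (BT.node l r).size := by
  simp [toOT, OT.size_node, BT.sum_size_spine, BT.size_node]

/-- `m` is the number of red children of the root, the length of the left spine of `l`. -/
def ordPos (m : ℕ) : List Bool → List ℕ
  | [] => []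
  | c :: q => ordPath c (cond c m 0) q

theorem mem_pathsAux_spine (d : Bool) (B : BT) (k : ℕ) (o : List ℕ) :
    o ∈ OT.pathsAux k (BT.spine d B) ↔ ∃ q ∈ B.paths, ordPath d k q = o := by
  induction B generalizing d k o with
  | nil => simp [BT.spine, OT.pathsAux, BT.not_mem_paths_nil]
  | node a b iha ihb =>
    have ih : ∀ c d' k o, o ∈ OT.pathsAux k (BT.spine d' ((BT.node a b).child c)) ↔
        ∃ q ∈ ((BT.node a b).child c).paths, ordPath d' k q = o := by
      intro c; cases c; exacts [iha, ihb]
    simp only [BT.spine_node, OT.pathsAux, OT.paths, map_cons, cons_append, mem_cons,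
      mem_append, mem_map, ih]
    constructor
    · rintro (rfl | ⟨_, ⟨q, hq, rfl⟩, rfl⟩ | ⟨q, hq, rfl⟩)
      · exact ⟨[], BT.nil_mem_paths_node a b, by simp [ordPath]⟩
      · exact ⟨(!d) :: q, BT.cons_mem_paths_node.mpr hq, ordPath_cons_not d k q⟩
      · exact ⟨d :: q, BT.cons_mem_paths_node.mpr hq, ordPath_cons_self d k q⟩
    · rintro ⟨_ | ⟨c, q⟩, hq, rfl⟩
      · exact Or.inl (by simp [ordPath])
      · rw [BT.cons_mem_paths_node] at hq
        by_cases hc : c = d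
        · subst hc
          exact Or.inr (Or.inr ⟨q, hq, (ordPath_cons_self c k q).symm⟩)
        · obtain rfl := Bool.eq_not_of_ne hc
          exact Or.inr (Or.inl ⟨_, ⟨q, hq, rfl⟩, (ordPath_cons_not d k q).symm⟩)

theorem ordPath_ne_nil (d : Bool) (k : ℕ) (q : List Bool) : ordPath d k q ≠ [] := by
  obtain ⟨j, o, h, -⟩ := ordPath_head d k q
  simp [h]

theorem mem_nonRoot_toOT {l r : BT} {o : List ℕ} :
    o ∈ (toOT l r).nonRoot ↔
      ∃ p ∈ (BT.node l r).nonRoot, ordPos (BT.spine false l).length p = o := by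
  simp only [OT.mem_nonRoot, toOT, OT.paths, mem_cons, OT.pathsAux_append, mem_append,
    mem_pathsAux_spine, zero_add]
  constructor
  · rintro ⟨(rfl | ⟨q, hq, rfl⟩ | ⟨q, hq, rfl⟩), hne⟩
    · exact absurd rfl hne
    · exact ⟨false :: q, BT.cons_mem_nonRoot_node.mpr hq, rfl⟩
    · exact ⟨true :: q, BT.cons_mem_nonRoot_node.mpr hq, rfl⟩
  · rintro ⟨_ | ⟨_ | _, q⟩, hp, rfl⟩
    · simp [BT.mem_nonRoot] at hp
    · rw [BT.cons_mem_nonRoot_node] at hp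
      exact ⟨Or.inr (Or.inl ⟨q, hp, rfl⟩), ordPath_ne_nil _ _ _⟩
    · rw [BT.cons_mem_nonRoot_node] at hp
      exact ⟨Or.inr (Or.inr ⟨q, hp, rfl⟩), ordPath_ne_nil _ _ _⟩

section Positions

variable {l r : BT}

theorem headD_ordPos_lt_iff {c : Bool} {q : List Bool} (hq : c :: q ∈ (BT.node l r).nonRoot) :
    (ordPos (BT.spine false l).length (c :: q)).headD 0 < (BT.spine false l).length ↔
      c = false := by
  rw [BT.cons_mem_nonRoot_node] at hq
  obtain ⟨j, o, h, hj⟩ := ordPath_head c (cond c (BT.spine false l).length 0) q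
  rw [ordPos, h]
  cases c
  · simpa [BT.child] using BT.replicate_mem_paths_iff.mp (BT.mem_paths_of_prefix hj hq)
  · simp

theorem ordPos_injOn {p p' : List Bool} (hp : p ∈ (BT.node l r).nonRoot)
    (hp' : p' ∈ (BT.node l r).nonRoot)
    (h : ordPos (BT.spine false l).length p = ordPos (BT.spine false l).length p') : p = p' := by
  obtain ⟨c, q, rfl⟩ := exists_cons_of_ne_nil (BT.mem_nonRoot.mp hp).2
  obtain ⟨c', q', rfl⟩ := exists_cons_of_ne_nil (BT.mem_nonRoot.mp hp').2
  have hc : c = c' := by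
    have := (headD_ordPos_lt_iff hp).symm.trans (h ▸ headD_ordPos_lt_iff hp')
    cases c <;> cases c' <;> simp_all
  subst hc
  rw [ordPath_injective _ _ h]

theorem canonicalColour_ordPos {p : List Bool} {b : Bool} (hp : p ∈ (BT.node l r).nonRoot)
    (hb : p.getLast? = some b) :
    canonicalColour (BT.spine false l).length (ordPos (BT.spine false l).length p) = !b := by
  obtain ⟨c, q, rfl⟩ := exists_cons_of_ne_nil (BT.mem_nonRoot.mp hp).2
  rw [getLast?_cons_eq_getLastD, Option.some_inj] at hb
  have hodd : Odd (ordPos (BT.spine false l).length (c :: q)).length ↔ b = c := by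
    rw [ordPos, odd_length_ordPath, hb]
  simp only [canonicalColour, headD_ordPos_lt_iff hp, hodd]
  cases b <;> cases c <;> simp

theorem exists_eq_append_of_descOrRightSibling {p p' : List Bool}
    (hp : p ∈ (BT.node l r).nonRoot) (hp' : p' ∈ (BT.node l r).nonRoot)
    (hcol : canonicalColour (BT.spine false l).length (ordPos (BT.spine false l).length p) =
      canonicalColour (BT.spine false l).length (ordPos (BT.spine false l).length p'))
    (h : DescOrRightSibling (ordPos (BT.spine false l).length p)
      (ordPos (BT.spine false l).length p')) :
    ∃ t ≠ [], p' = p ++ t := by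
  obtain ⟨c, q, rfl⟩ := exists_cons_of_ne_nil (BT.mem_nonRoot.mp hp).2
  obtain ⟨c', q', rfl⟩ := exists_cons_of_ne_nil (BT.mem_nonRoot.mp hp').2
  have hc : c = c' := by
    have := (headD_ordPos_lt_iff hp).symm.trans <|
      (headD_lt_iff_of_descOrRightSibling (ordPath_ne_nil _ _ _) h hcol).trans
        (headD_ordPos_lt_iff hp')
    cases c <;> cases c' <;> simp_all
  subst hc
  obtain ⟨t, ht, he⟩ := exists_binPath_eq_append h c
  simp only [ordPos, binPath_ordPath, append_assoc] at he
  exact ⟨t, ht, by rw [append_cancel_left he, cons_append]⟩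

theorem ordPos_append_cons_not {p : List Bool} {b : Bool} (hp : p.getLast? = some b)
    (m : ℕ) (s : List Bool) : ordPos m (p ++ (!b) :: s) = ordPos m p ++ ordPath (!b) 0 s := by
  obtain ⟨c, q, rfl⟩ : ∃ c q, p = c :: q := exists_cons_of_ne_nil (by rintro rfl; cases hp)
  rw [getLast?_cons_eq_getLastD, Option.some_inj] at hp
  exact ordPath_append_cons_not hp _ s

theorem ordPos_append_replicate {p : List Bool} {b : Bool} (hp : p.getLast? = some b)
    (m a : ℕ) :
    ∃ u i, ordPos m p = u ++ [i] ∧ ordPos m (p ++ replicate a b) = u ++ [i + a] := by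
  obtain ⟨c, q, rfl⟩ : ∃ c q, p = c :: q := exists_cons_of_ne_nil (by rintro rfl; cases hp)
  rw [getLast?_cons_eq_getLastD, Option.some_inj] at hp
  exact ordPath_append_replicate hp _ a

end Positions

theorem bijOn_Icc_iff_bijective {β : Type*} {T : Set β} {n : ℕ} {g : β → ℕ}
    (hg : ∀ t ∈ T, g t ∈ Set.Icc 1 n) :
    Set.BijOn g T (Set.Icc 1 n) ↔ Function.Bijective fun t : T =>
      (⟨g t - 1, by have := hg t t.2; simp only [Set.mem_Icc] at this; omega⟩ : Fin n) := by
  have hg' : ∀ t : T, 1 ≤ g t := fun t => (hg t t.2).1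
  constructor
  · refine fun h => ⟨fun t t' htt' => Subtype.ext (h.injOn t.2 t'.2 ?_), fun y => ?_⟩
    · have := congrArg Fin.val htt'
      simp only at this
      have := hg' t; have := hg' t'
      omega
    · obtain ⟨t, ht, hty⟩ := h.surjOn (show (y : ℕ) + 1 ∈ Set.Icc 1 n by simp)
      exact ⟨⟨t, ht⟩, Fin.ext (by simp [hty])⟩
  · refine fun h => ⟨hg, fun t ht t' ht' htt' => ?_, fun y hy => ?_⟩
    · have := @h.1 ⟨t, ht⟩ ⟨t', ht'⟩ (Fin.ext (by simp [htt']))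
      exact congrArg Subtype.val this
    · simp only [Set.mem_Icc] at hy
      obtain ⟨t, ht⟩ := h.2 ⟨y - 1, by omega⟩
      have := congrArg Fin.val ht
      simp only at this
      exact ⟨t, t.2, by have := hg' t; omega⟩

namespace NAT

variable {B : BT}

def rank (N : NAT B) : (b : Bool) → {p // p ∈ B.sideVertices b} → Fin (B.sideVertices b).card
  | false => N.fL
  | true => N.fR

theorem rank_bijective (N : NAT B) (b : Bool) : Function.Bijective (N.rank b) := by
  cases b
  exacts [N.bijL, N.bijR]

theorem rank_lt_rank (N : NAT B) (b : Bool) (u v : {p // p ∈ B.sideVertices b}) (h : u.1 <+: v.1)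
    (hne : u ≠ v) : (N.rank b v : ℕ) < N.rank b u := by
  cases b
  exacts [N.ancL u v h hne, N.ancR u v h hne]

section ofRank

variable (f : (b : Bool) → {p // p ∈ B.sideVertices b} → Fin (B.sideVertices b).card)
  (hf : ∀ b, Function.Bijective (f b))
  (hlt : ∀ b (u v : {p // p ∈ B.sideVertices b}),
    u.1 <+: v.1 → u ≠ v → (f b v : ℕ) < f b u)

def ofRank : NAT B :=
  ⟨f false, f true, hf false, hf true, hlt false, hlt true⟩

theorem rank_ofRank : (ofRank f hf hlt).rank = f := by
  funext b
  cases b <;> rfl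

end ofRank

theorem ext_rank {N N' : NAT B} (h : N.rank = N'.rank) : N = N' := by
  obtain ⟨fL, fR, _, _, _, _⟩ := N
  obtain ⟨fL', fR', _, _, _, _⟩ := N'
  obtain rfl : fL = fL' := congrFun h false
  obtain rfl : fR = fR' := congrFun h true
  rfl

def label (N : NAT B) (p : List Bool) : ℕ :=
  if h : p ∈ B.sideVertices false then N.rank false ⟨p, h⟩ + 1
  else if h : p ∈ B.sideVertices true then N.rank true ⟨p, h⟩ + 1 else 0

theorem label_eq_rank_add_one (N : NAT B) {b : Bool} (x : {p // p ∈ B.sideVertices b}) :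
    N.label x = N.rank b x + 1 := by
  cases b
  · simp [label, x.2]
  · have : x.1 ∉ B.sideVertices false := fun h => by
      simpa [(BT.mem_sideVertices.mp x.2).2] using (BT.mem_sideVertices.mp h).2
    simp [label, x.2, this]

end NAT

namespace NOTL

variable {O : OT}

theorem ext_colour_label {L L' : NOTL O} (hc : L.colour = L'.colour) (hl : L.label = L'.label) :
    L = L' := by
  obtain ⟨c, l, _, _, _, _, _⟩ := L
  obtain ⟨c', l', _, _, _, _, _⟩ := L'
  obtain rfl : c = c' := hc
  obtain rfl : l = l' := hl
  rfl

theorem bijOn_label (L : NOTL O) (c : Bool) :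
    Set.BijOn L.label {v | L.colour v = c} (Set.Icc 1 {v | L.colour v = c}.ncard) := by
  cases c
  exacts [L.bijBlue, L.bijRed]

theorem label_lt_label (L : NOTL O) {v w : {o // o ∈ O.nonRoot}} (hc : L.colour v = L.colour w)
    (h : DescOrRightSibling v.1 w.1) : L.label w < L.label v :=
  L.decreasing v w hc (h.imp_left fun h => ⟨h.1, fun hvw => h.2 (congrArg Subtype.val hvw)⟩)

theorem colour_eq_canonicalColour (L : NOTL O) {m : ℕ}
    (hroot : ∀ i (hi : [i] ∈ O.nonRoot), L.colour ⟨[i], hi⟩ = decide (i < m))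
    (v : {o // o ∈ O.nonRoot}) : L.colour v = canonicalColour m v.1 := by
  obtain ⟨o, ho⟩ := v
  induction o using List.reverseRecOn with
  | nil => exact absurd rfl (OT.mem_nonRoot.mp ho).2
  | append_singleton u i ih =>
    rcases eq_or_ne u [] with rfl | hu
    · exact (hroot i ho).trans (canonicalColour_singleton m i).symm
    · have hu' : u ∈ O.nonRoot := OT.mem_nonRoot.mpr
        ⟨OT.mem_paths_of_prefix (prefix_append u [i]) (OT.mem_nonRoot.mp ho).1, hu⟩
      rw [L.alternating ⟨u, hu'⟩ ⟨u ++ [i], ho⟩ ⟨i, rfl⟩, ih hu',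
        canonicalColour_append_singleton hu]

theorem exists_colour_root_eq_decide_lt {cs : List OT} (L : NOTL (.node cs)) :
    ∃ k ≤ cs.length,
      ∀ i (hi : [i] ∈ (OT.node cs).nonRoot), L.colour ⟨[i], hi⟩ = decide (i < k) := by
  classical
  -- `k` is the first index that is not a red child of the root; `rootOrder` forbids red children
  -- after it.
  have hlen : ¬ ∃ hk : [cs.length] ∈ (OT.node cs).nonRoot, L.colour ⟨_, hk⟩ = true :=
    fun ⟨hk, _⟩ => lt_irrefl _ (OT.singleton_mem_nonRoot_node.mp hk)
  have hex : ∃ k, ¬ ∃ hk : [k] ∈ (OT.node cs).nonRoot, L.colour ⟨[k], hk⟩ = true := ⟨_, hlen⟩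
  refine ⟨Nat.find hex, Nat.find_min' hex hlen, fun i hi => ?_⟩
  by_cases hik : i < Nat.find hex
  · obtain ⟨_, h⟩ := not_not.mp (Nat.find_min hex hik)
    rw [decide_eq_true hik]
    exact h
  · rw [decide_eq_false hik, Bool.eq_false_iff]
    intro hred
    have hk : [Nat.find hex] ∈ (OT.node cs).nonRoot := by
      rw [OT.singleton_mem_nonRoot_node] at hi ⊢
      omega
    have hblue : L.colour ⟨_, hk⟩ = false := by
      simpa using fun h => Nat.find_spec hex ⟨hk, h⟩
    have := L.rootOrder i _ hi hk hred hblue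
    omega

end NOTL

section Correspondence

variable {l r : BT}

noncomputable def posEquiv (l r : BT) :
    {p // p ∈ (BT.node l r).nonRoot} ≃ {o // o ∈ (toOT l r).nonRoot} :=
  Equiv.ofBijective
    (fun p => ⟨ordPos (BT.spine false l).length p, mem_nonRoot_toOT.mpr ⟨p, p.2, rfl⟩⟩)
    ⟨fun p p' h => Subtype.ext (ordPos_injOn p.2 p'.2 (congrArg Subtype.val h)), fun o => by
      obtain ⟨p, hp, h⟩ := mem_nonRoot_toOT.mp o.2
      exact ⟨⟨p, hp⟩, Subtype.ext h⟩⟩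

theorem coe_posEquiv (p : {p // p ∈ (BT.node l r).nonRoot}) :
    (posEquiv l r p : List ℕ) = ordPos (BT.spine false l).length p := rfl

theorem canonicalColour_ordPos_eq_not_iff {p : List Bool} (hp : p ∈ (BT.node l r).nonRoot)
    (b : Bool) :
    canonicalColour (BT.spine false l).length (ordPos (BT.spine false l).length p) = !b ↔
      p ∈ (BT.node l r).sideVertices b := by
  obtain ⟨c, q, rfl⟩ := exists_cons_of_ne_nil (BT.mem_nonRoot.mp hp).2
  rw [canonicalColour_ordPos hp (getLast?_cons_eq_getLastD c q), BT.mem_sideVertices,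
    getLast?_cons_eq_getLastD, Bool.not_inj_iff, Option.some_inj]
  exact ⟨fun h => ⟨(BT.mem_nonRoot.mp hp).1, h⟩, And.right⟩

noncomputable def colourClassEquiv (l r : BT) (b : Bool) :
    {v : {o // o ∈ (toOT l r).nonRoot} | canonicalColour (BT.spine false l).length v.1 = !b} ≃
      {p // p ∈ (BT.node l r).sideVertices b} :=
  ((posEquiv l r).symm.subtypeEquiv fun v => by
      conv_lhs => rw [← (posEquiv l r).apply_symm_apply v]
      exact canonicalColour_ordPos_eq_not_iff ((posEquiv l r).symm v).2 b).trans
    (Equiv.subtypeSubtypeEquivSubtype BT.mem_nonRoot_of_mem_sideVertices)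

theorem ncard_canonicalColour_eq (l r : BT) (b : Bool) :
    {v : {o // o ∈ (toOT l r).nonRoot} |
      canonicalColour (BT.spine false l).length v.1 = !b}.ncard =
      ((BT.node l r).sideVertices b).card := by
  rw [← Nat.card_coe_set_eq, ← Nat.card_eq_finsetCard]
  exact Nat.card_congr (colourClassEquiv l r b)

namespace NAT

theorem label_append_lt {B : BT} (N : NAT B) {b : Bool} {p t : List Bool}
    (hp : p ∈ B.sideVertices b) (hpt : p ++ t ∈ B.sideVertices b) (ht : t ≠ []) :
    N.label (p ++ t) < N.label p := by
  rw [N.label_eq_rank_add_one ⟨p, hp⟩, N.label_eq_rank_add_one ⟨p ++ t, hpt⟩]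
  have := N.rank_lt_rank b ⟨p, hp⟩ ⟨p ++ t, hpt⟩ (prefix_append p t) (by simpa using ht)
  omega

theorem bijOn_label_posEquiv_symm (N : NAT (BT.node l r)) (b : Bool) :
    Set.BijOn (fun v => N.label ((posEquiv l r).symm v).1)
      {v | canonicalColour (BT.spine false l).length v.1 = !b}
      (Set.Icc 1 {v : {o // o ∈ (toOT l r).nonRoot} |
        canonicalColour (BT.spine false l).length v.1 = !b}.ncard) := by
  rw [ncard_canonicalColour_eq]
  have hlabel : ∀ v (hv : v ∈ {v : {o // o ∈ (toOT l r).nonRoot} |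
      canonicalColour (BT.spine false l).length v.1 = !b}),
      N.label ((posEquiv l r).symm v).1 = N.rank b (colourClassEquiv l r b ⟨v, hv⟩) + 1 :=
    fun v hv => N.label_eq_rank_add_one (colourClassEquiv l r b ⟨v, hv⟩)
  refine (bijOn_Icc_iff_bijective fun v hv => ?_).mpr ?_
  · rw [hlabel v hv, Set.mem_Icc]
    exact ⟨by omega, (N.rank b _).isLt⟩
  · convert (N.rank_bijective b).comp (colourClassEquiv l r b).bijective using 1
    funext ⟨v, hv⟩
    ext
    simp [hlabel v hv]

noncomputable def toNOTL (N : NAT (BT.node l r)) : NOTL (toOT l r) where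
  colour v := canonicalColour (BT.spine false l).length v.1
  label v := N.label ((posEquiv l r).symm v).1
  bijRed := N.bijOn_label_posEquiv_symm false
  bijBlue := N.bijOn_label_posEquiv_symm true
  rootOrder i j _ _ hi hj := by
    simp only [canonicalColour_singleton, decide_eq_true_eq, decide_eq_false_iff_not] at hi hj
    omega
  alternating v w := by
    rintro ⟨i, hw⟩
    simp only [hw]
    exact canonicalColour_append_singleton (OT.mem_nonRoot.mp v.2).2 _ i
  decreasing v w hc h := by
    obtain ⟨p, rfl⟩ := (posEquiv l r).surjective v
    obtain ⟨p', rfl⟩ := (posEquiv l r).surjective w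
    simp only [Equiv.symm_apply_apply]
    obtain ⟨t, ht, hpt⟩ := exists_eq_append_of_descOrRightSibling p.2 p'.2 hc
      (h.imp_left fun h => ⟨h.1, fun e => h.2 (Subtype.ext e)⟩)
    obtain ⟨b, hb⟩ : ∃ b, canonicalColour (BT.spine false l).length (posEquiv l r p).1 = !b :=
      ⟨!_, (Bool.not_not _).symm⟩
    have hp' := (canonicalColour_ordPos_eq_not_iff p'.2 b).mp (hc ▸ hb)
    rw [hpt] at hp' ⊢
    exact N.label_append_lt ((canonicalColour_ordPos_eq_not_iff p.2 b).mp hb) hp' ht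

theorem colour_toNOTL (N : NAT (BT.node l r)) (v : {o // o ∈ (toOT l r).nonRoot}) :
    N.toNOTL.colour v = canonicalColour (BT.spine false l).length v.1 := rfl

theorem label_toNOTL_posEquiv (N : NAT (BT.node l r)) (p : {p // p ∈ (BT.node l r).nonRoot}) :
    N.toNOTL.label (posEquiv l r p) = N.label p := by
  simp [toNOTL]

end NAT
end Correspondence

namespace NOTL

variable {l r : BT} (L : NOTL (toOT l r))

def HasCanonicalColour : Prop :=
  ∀ v, L.colour v = canonicalColour (BT.spine false l).length v.1

noncomputable def labelOf (p : List Bool) : ℕ :=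
  if h : p ∈ (BT.node l r).nonRoot then L.label (posEquiv l r ⟨p, h⟩) else 0

theorem labelOf_of_mem {p : List Bool} (h : p ∈ (BT.node l r).nonRoot) :
    L.labelOf p = L.label (posEquiv l r ⟨p, h⟩) :=
  dif_pos h

theorem bijOn_label_of_canonical (hcol : L.HasCanonicalColour) (b : Bool) :
    Set.BijOn L.label {v | canonicalColour (BT.spine false l).length v.1 = !b}
      (Set.Icc 1 ((BT.node l r).sideVertices b).card) := by
  have h := L.bijOn_label (!b)
  simp only [show ∀ v, L.colour v = _ from hcol] at h
  rwa [ncard_canonicalColour_eq] at h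

theorem labelOf_mem_Icc (hcol : L.HasCanonicalColour) {b : Bool}
    {p : List Bool} (hp : p ∈ (BT.node l r).sideVertices b) :
    L.labelOf p ∈ Set.Icc 1 ((BT.node l r).sideVertices b).card := by
  rw [L.labelOf_of_mem (BT.mem_nonRoot_of_mem_sideVertices hp)]
  exact (L.bijOn_label_of_canonical hcol b).mapsTo
    ((canonicalColour_ordPos_eq_not_iff (BT.mem_nonRoot_of_mem_sideVertices hp) b).mpr hp)

theorem labelOf_lt_of_descOrRightSibling (hcol : L.HasCanonicalColour) {b : Bool}
    {p p' : List Bool} (hp : p ∈ (BT.node l r).sideVertices b)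
    (hp' : p' ∈ (BT.node l r).sideVertices b)
    (h : DescOrRightSibling (ordPos (BT.spine false l).length p)
      (ordPos (BT.spine false l).length p')) :
    L.labelOf p' < L.labelOf p := by
  have hp₀ := BT.mem_nonRoot_of_mem_sideVertices hp
  have hp₀' := BT.mem_nonRoot_of_mem_sideVertices hp'
  rw [L.labelOf_of_mem hp₀, L.labelOf_of_mem hp₀']
  refine L.label_lt_label ?_ h
  rw [hcol, hcol, coe_posEquiv, coe_posEquiv, (canonicalColour_ordPos_eq_not_iff hp₀ b).mpr hp,
    (canonicalColour_ordPos_eq_not_iff hp₀' b).mpr hp']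

theorem labelOf_append_replicate_lt (hcol : L.HasCanonicalColour) {b : Bool}
    {p : List Bool} {a : ℕ} (hp : p ∈ (BT.node l r).sideVertices b)
    (hpa : p ++ replicate a b ∈ (BT.node l r).paths) (ha : 0 < a) :
    L.labelOf (p ++ replicate a b) < L.labelOf p := by
  obtain ⟨u, i, h₁, h₂⟩ :=
    ordPos_append_replicate (BT.mem_sideVertices.mp hp).2 (BT.spine false l).length a
  exact L.labelOf_lt_of_descOrRightSibling hcol hp (BT.append_replicate_mem_sideVertices hp hpa)
    (Or.inr ⟨u, i, i + a, h₁, h₂, by omega⟩)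

/-- In the ordered tree, a strict same-colour descendant `p ++ t` of `p` in the binary tree is a
right sibling `p ++ replicate a b` of `p` or a descendant of `p` or of such a sibling. -/
theorem labelOf_append_lt (hcol : L.HasCanonicalColour) {b : Bool}
    {p t : List Bool} (hp : p ∈ (BT.node l r).sideVertices b)
    (hpt : p ++ t ∈ (BT.node l r).sideVertices b) (ht : t ≠ []) :
    L.labelOf (p ++ t) < L.labelOf p := by
  obtain ⟨a, s, rfl, rfl | ⟨s, rfl⟩⟩ := exists_eq_replicate_append b t
  · rw [append_nil] at hpt ht ⊢
    exact L.labelOf_append_replicate_lt hcol hp (BT.mem_sideVertices.mp hpt).1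
      (Nat.pos_of_ne_zero fun ha => ht (by rw [ha, replicate_zero]))
  · rw [← append_assoc] at hpt ⊢
    have hx : p ++ replicate a b ∈ (BT.node l r).sideVertices b :=
      BT.append_replicate_mem_sideVertices hp
        (BT.mem_paths_of_prefix (prefix_append _ _) (BT.mem_sideVertices.mp hpt).1)
    have hdesc := ordPos_append_cons_not (BT.mem_sideVertices.mp hx).2 (BT.spine false l).length s
    have hlt : L.labelOf (p ++ replicate a b ++ (!b) :: s) < L.labelOf (p ++ replicate a b) :=
      L.labelOf_lt_of_descOrRightSibling hcol hx hpt
        (Or.inl ⟨⟨_, hdesc.symm⟩, by rw [hdesc]; simpa using ordPath_ne_nil _ _ _⟩)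
    rcases Nat.eq_zero_or_pos a with rfl | ha
    · simpa using hlt
    · exact hlt.trans (L.labelOf_append_replicate_lt hcol hp (BT.mem_sideVertices.mp hx).1 ha)

noncomputable def rankOf (hcol : L.HasCanonicalColour) (b : Bool)
    (x : {p // p ∈ (BT.node l r).sideVertices b}) : Fin ((BT.node l r).sideVertices b).card :=
  ⟨L.labelOf x - 1, by
    have := L.labelOf_mem_Icc hcol x.2
    simp only [Set.mem_Icc] at this
    omega⟩

theorem rankOf_bijective (hcol : L.HasCanonicalColour) (b : Bool) :
    Function.Bijective (L.rankOf hcol b) := by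
  have h := (bijOn_Icc_iff_bijective fun v hv => (L.bijOn_label_of_canonical hcol b).mapsTo hv).mp
    (L.bijOn_label_of_canonical hcol b)
  convert h.comp (colourClassEquiv l r b).symm.bijective using 1
  funext x
  ext
  simp only [rankOf, L.labelOf_of_mem (BT.mem_nonRoot_of_mem_sideVertices x.2),
    Function.comp_apply]
  rfl

theorem rankOf_lt_rankOf (hcol : L.HasCanonicalColour) (b : Bool)
    (u v : {p // p ∈ (BT.node l r).sideVertices b}) (h : u.1 <+: v.1) (hne : u ≠ v) :
    (L.rankOf hcol b v : ℕ) < L.rankOf hcol b u := by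
  obtain ⟨t, ht⟩ := h
  have hlt := L.labelOf_append_lt hcol u.2 (ht ▸ v.2)
    (by rintro rfl; exact hne (Subtype.ext (by simpa using ht)))
  have := L.labelOf_mem_Icc hcol v.2
  simp only [rankOf, ← ht, Set.mem_Icc] at hlt this ⊢
  omega

noncomputable def toNAT (hcol : L.HasCanonicalColour) :
    NAT (BT.node l r) :=
  NAT.ofRank (L.rankOf hcol) (L.rankOf_bijective hcol) (L.rankOf_lt_rankOf hcol)

theorem toNOTL_toNAT (hcol : L.HasCanonicalColour) :
    (L.toNAT hcol).toNOTL = L := by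
  refine ext_colour_label (funext fun v => (hcol v).symm) (funext fun v => ?_)
  obtain ⟨p, rfl⟩ := (posEquiv l r).surjective v
  obtain ⟨b, hb⟩ : ∃ b, p.1 ∈ (BT.node l r).sideVertices b :=
    ⟨_, (canonicalColour_ordPos_eq_not_iff p.2 _).mp (Bool.not_not _).symm⟩
  have := L.labelOf_mem_Icc hcol hb
  rw [NAT.label_toNOTL_posEquiv, NAT.label_eq_rank_add_one _ ⟨p.1, hb⟩, toNAT, NAT.rank_ofRank,
    ← L.labelOf_of_mem p.2]
  simp only [rankOf, Set.mem_Icc] at this ⊢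
  omega

end NOTL

theorem NAT.toNOTL_injective {l r : BT} :
    Function.Injective (NAT.toNOTL : NAT (BT.node l r) → NOTL (toOT l r)) := by
  intro N N' h
  refine NAT.ext_rank (funext fun b => funext fun x => Fin.ext ?_)
  have := congrArg
    (fun L => L.label (posEquiv l r ⟨x, BT.mem_nonRoot_of_mem_sideVertices x.2⟩)) h
  simp only [NAT.label_toNOTL_posEquiv, NAT.label_eq_rank_add_one _ x] at this
  omega

def redRootChildren (T : Σ O : OT, NOTL O) (i : ℕ) : Prop :=
  ∃ h : [i] ∈ T.1.nonRoot, T.2.colour ⟨[i], h⟩ = true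

theorem redRootChildren_toNOTL {l r : BT} (N : NAT (BT.node l r)) (i : ℕ) :
    redRootChildren ⟨toOT l r, N.toNOTL⟩ i ↔ i < (BT.spine false l).length := by
  simp only [redRootChildren, NAT.colour_toNOTL, canonicalColour_singleton, decide_eq_true_eq]
  refine ⟨fun ⟨_, h⟩ => h, fun h => ⟨OT.singleton_mem_nonRoot_node.mpr ?_, h⟩⟩
  simp only [length_append]
  omega

theorem eq_of_toOT_eq {l r l' r' : BT} (h : toOT l r = toOT l' r')
    (hl : (BT.spine false l).length = (BT.spine false l').length) : l = l' ∧ r = r' := by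
  obtain ⟨h₁, h₂⟩ := append_inj (OT.node.inj h) hl
  exact ⟨by rw [← BT.ofSpine_spine false l, h₁, BT.ofSpine_spine],
    by rw [← BT.ofSpine_spine true r, h₂, BT.ofSpine_spine]⟩

theorem NOTL.exists_toOT_eq {O : OT} (L : NOTL O) :
    ∃ l r, toOT l r = O ∧
      ∀ i (hi : [i] ∈ O.nonRoot),
        L.colour ⟨[i], hi⟩ = decide (i < (BT.spine false l).length) := by
  obtain ⟨cs⟩ := O
  obtain ⟨k, hk, hroot⟩ := L.exists_colour_root_eq_decide_lt
  refine ⟨BT.ofSpine false (cs.take k), BT.ofSpine true (cs.drop k), ?_, ?_⟩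
  · simp [toOT, BT.spine_ofSpine]
  · simpa [BT.spine_ofSpine, hk] using hroot

noncomputable def toSigmaNOTL : {T : Σ B : BT, NAT B // T.1 ≠ .nil} → Σ O : OT, NOTL O
  | ⟨⟨.node l r, N⟩, _⟩ => ⟨toOT l r, N.toNOTL⟩
  | ⟨⟨.nil, _⟩, h⟩ => absurd rfl h

theorem size_toSigmaNOTL (T : {T : Σ B : BT, NAT B // T.1 ≠ .nil}) :
    (toSigmaNOTL T).1.size = T.1.1.size := by
  obtain ⟨⟨_ | ⟨l, r⟩, N⟩, hT⟩ := T
  · exact absurd rfl hT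
  · exact size_toOT l r

theorem toSigmaNOTL_bijective : Function.Bijective toSigmaNOTL := by
  refine ⟨?_, fun ⟨O, L⟩ => ?_⟩
  · rintro ⟨⟨_ | ⟨l, r⟩, N⟩, hT⟩ ⟨⟨_ | ⟨l', r'⟩, N'⟩, hT'⟩ h
    any_goals exact absurd rfl ‹_›
    change (⟨toOT l r, N.toNOTL⟩ : Σ O : OT, NOTL O) = ⟨toOT l' r', N'.toNOTL⟩ at h
    have hl : (BT.spine false l).length = (BT.spine false l').length := eq_of_forall_lt_iff
      fun i => by rw [← redRootChildren_toNOTL N, ← redRootChildren_toNOTL N', h]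
    obtain ⟨rfl, rfl⟩ := eq_of_toOT_eq (congrArg Sigma.fst h) hl
    obtain rfl := NAT.toNOTL_injective (eq_of_heq (Sigma.mk.inj h).2)
    rfl
  · obtain ⟨l, r, rfl, hroot⟩ := L.exists_toOT_eq
    have hcol := L.colour_eq_canonicalColour hroot
    exact ⟨⟨⟨.node l r, L.toNAT hcol⟩, BT.noConfusion⟩,
      congrArg (Sigma.mk (toOT l r)) (L.toNOTL_toNAT hcol)⟩

/-- Non-ambiguous trees with `n ≥ 1` vertices are equinumerous with the
labelled ordered trees of the class `NOT` with `n` vertices. -/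
theorem natCount_eq_notCount (n : ℕ) (hn : 1 ≤ n) :
    Nat.card {T : Σ B : BT, NAT B // T.1.size = n} =
      Nat.card {T : Σ O : OT, NOTL O // T.1.size = n} := by
  have hne : ∀ {T : Σ B : BT, NAT B}, T.1.size = n → T.1 ≠ .nil := by
    rintro ⟨B, N⟩ h rfl
    simp only [BT.size, BT.paths, length_nil] at h
    omega
  calc Nat.card {T : Σ B : BT, NAT B // T.1.size = n}
      = Nat.card {T : {T : Σ B : BT, NAT B // T.1 ≠ .nil} // T.1.1.size = n} :=
        Nat.card_congr (Equiv.subtypeSubtypeEquivSubtype hne).symm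
    _ = Nat.card {T : Σ O : OT, NOTL O // T.1.size = n} :=
        Nat.card_congr <| (Equiv.ofBijective _ toSigmaNOTL_bijective).subtypeEquiv fun T => by
          rw [Equiv.ofBijective_apply, size_toSigmaNOTL]
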